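/- arXiv:math/0611588 — 3 statements merged into one kernel-verified Lean document; each statement's English description precedes it below -/
import Mathlib

section
/- If B is an anticonnected set of p vertices of the complement of the cycle C_n (n ≥ 5, 1 ≤ p ≤ n−2), then the co-contraction of the complement of C_n relative to B is isomorphic to the complement of C_{n−p+1}. -/
open SimpleGraph

variable {V : Type*}

/-- Relators of the right-angled Artin group on a graph. -/
def raagRels (G : SimpleGraph V) : Set (FreeGroup V) :=
  {r | ∃ a b : V, G.Adj a b ∧
    r = FreeGroup.of a * FreeGroup.of b * (FreeGroup.of a)⁻¹ * (FreeGroup.of b)⁻¹}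

/-- The right-angled Artin group on a graph. -/
def RAAG (G : SimpleGraph V) : Type _ := PresentedGroup (raagRels G)

instance (G : SimpleGraph V) : Group (RAAG G) := by unfold RAAG; infer_instance

/-- The generator of `RAAG G` corresponding to a vertex. -/
def RAAG.gen (G : SimpleGraph V) (v : V) : RAAG G := PresentedGroup.of v

/-- The element of `RAAG G` represented by a word. -/
def wordProd (G : SimpleGraph V) (w : List (V × Bool)) : RAAG G :=
  (w.map fun p => if p.2 then RAAG.gen G p.1 else (RAAG.gen G p.1)⁻¹).prod

/-- A word is reduced if no shorter word represents the same element. -/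
def IsReducedWord (G : SimpleGraph V) (w : List (V × Bool)) : Prop :=
  ∀ w' : List (V × Bool), wordProd G w' = wordProd G w → w.length ≤ w'.length

/-- `B` is anticonnected in `G` if it induces a connected subgraph of the complement. -/
def Anticonnected (G : SimpleGraph V) (B : Set V) : Prop :=
  ((Gᶜ).induce B).Connected

/-- Contraction of a graph relative to a set `B` of vertices: `B` collapses to
the vertex `none`. -/
def SimpleGraph.contract (G : SimpleGraph V) (B : Set V) :
    SimpleGraph (Option {v : V // v ∉ B}) where
  Adj x y :=
    match x, y with
    | some q, some q' => G.Adj q.1 q'.1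
    | some q, none => ∃ b ∈ B, G.Adj q.1 b
    | none, some q => ∃ b ∈ B, G.Adj q.1 b
    | none, none => False
  symm := by
    constructor
    rintro (_|q) (_|q') h
    · exact h
    · exact h
    · exact h
    · exact G.adj_symm h
  loopless := by
    constructor
    rintro (_|q) h
    · exact h
    · exact G.irrefl h

/-- Co-contraction of a graph relative to a set `B` of vertices: `B` collapses to
the vertex `none`, which is joined to the common neighbors of `B`. -/
def SimpleGraph.coContract (G : SimpleGraph V) (B : Set V) :
    SimpleGraph (Option {v : V // v ∉ B}) where
  Adj x y :=
    match x, y with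
    | some q, some q' => G.Adj q.1 q'.1
    | some q, none => ∀ b ∈ B, G.Adj q.1 b
    | none, some q => ∀ b ∈ B, G.Adj q.1 b
    | none, none => False
  symm := by
    constructor
    rintro (_|q) (_|q') h
    · exact h
    · exact h
    · exact h
    · exact G.adj_symm h
  loopless := by
    constructor
    rintro (_|q) h
    · exact h
    · exact G.irrefl h

/-- The formal inverse of a word. -/
def wordInv (w : List (V × Bool)) : List (V × Bool) :=
  w.reverse.map fun p => (p.1, !p.2)

/-- The word obtained by concatenating `m` copies of `v` (or `|m|` copies of the
inverse word when `m < 0`). -/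
def wordZPow (v : List (V × Bool)) : ℤ → List (V × Bool)
  | Int.ofNat m => (List.replicate m v).flatten
  | Int.negSucc m => (List.replicate (m + 1) (wordInv v)).flatten

/-- A sequence of vertices of `B` is a contraction sequence if for every pair
`b, b'` of vertices of `B` it has a subsequence which is a path from `b` to `b'`
in the complement graph. -/
def IsContractionSeq (G : SimpleGraph V) (B : Set V) (bs : List V) : Prop :=
  ∀ b ∈ B, ∀ b' ∈ B, ∃ l : List V, l.Sublist bs ∧ l.head? = some b ∧
    l.getLast? = some b' ∧ l.Chain' (fun x y => x ≠ y ∧ ¬ G.Adj x y)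

/-- A contraction word of `B`: a reduced word with letters in `B^{±1}` whose
sequence of letters is a contraction sequence. -/
def IsContractionWord (G : SimpleGraph V) (B : Set V) (w : List (V × Bool)) : Prop :=
  IsReducedWord G w ∧ (∀ p ∈ w, p.1 ∈ B) ∧ IsContractionSeq G B (w.map Prod.fst)

/-- A contraction element of `B` is one represented by a contraction word of `B`. -/
def IsContractionElem (G : SimpleGraph V) (B : Set V) (g : RAAG G) : Prop :=
  ∃ w : List (V × Bool), IsContractionWord G B w ∧ wordProd G w = g
section AuxForCoContract

private lemma hmod_aux (n s : ℕ) (hn : 0 < n) (hs : s < 2 * n) :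
    s % n = if s < n then s else s - n := by
  split_ifs with h
  · exact Nat.mod_eq_of_lt h
  · rw [Nat.mod_eq_sub_mod (le_of_not_gt h), Nat.mod_eq_of_lt (by omega)]

private lemma cycleAdjVal {n : ℕ} (hn : 2 ≤ n) (u v : Fin n) :
    (cycleGraph n).Adj u v ↔
      (u.val + 1 = v.val ∨ v.val + 1 = u.val ∨ (u.val = 0 ∧ v.val + 1 = n) ∨
        (v.val = 0 ∧ u.val + 1 = n)) := by
  have hu := u.isLt
  have hv := v.isLt
  rw [cycleGraph_adj', Fin.sub_def, Fin.sub_def]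
  simp only [Fin.val_mk]
  rw [hmod_aux n _ (by omega) (by omega), hmod_aux n _ (by omega) (by omega)]
  split_ifs <;> omega

private def rotIso {n : ℕ} [NeZero n] (d : Fin n) : cycleGraph n ≃g cycleGraph n where
  toEquiv := Equiv.addRight d
  map_rel_iff' := by
    intro a b
    simp only [Equiv.coe_addRight, cycleGraph_adj', add_sub_add_right_eq_sub]

private def complIso {V W : Type*} {G : SimpleGraph V} {H : SimpleGraph W} (e : G ≃g H) :
    Gᶜ ≃g Hᶜ where
  toEquiv := e.toEquiv
  map_rel_iff' := by
    intro a b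
    show Hᶜ.Adj (e a) (e b) ↔ _
    simp only [compl_adj, e.map_adj_iff, ne_eq, (RelIso.injective e).eq_iff]

private noncomputable def induceIso {V W : Type*} {G : SimpleGraph V} {H : SimpleGraph W}
    (e : G ≃g H) (s : Set V) : G.induce s ≃g H.induce (⇑e '' s) where
  toEquiv := Equiv.Set.image ⇑e s (RelIso.injective e)
  map_rel_iff' := by
    intro a b
    simp only [Equiv.Set.image, Equiv.Set.imageOfInjOn, comap_adj, Function.Embedding.coe_subtype,
      Equiv.coe_fn_mk]
    exact e.map_adj_iff

private def coContractIso {V W : Type*} {G : SimpleGraph V} {H : SimpleGraph W} (e : G ≃g H)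
    (B : Set V) : G.coContract B ≃g H.coContract (⇑e '' B) where
  toEquiv := (e.toEquiv.subtypeEquiv fun v =>
    not_congr ((RelIso.injective e).mem_set_image).symm).optionCongr
  map_rel_iff' := by
    rintro (_ | q) (_ | q')
    · exact Iff.rfl
    · show (∀ b ∈ ⇑e '' B, H.Adj (e q'.1) b) ↔ (∀ b ∈ B, G.Adj q'.1 b)
      constructor
      · intro h b hb
        have := h (e b) ⟨b, hb, rfl⟩
        rwa [e.map_adj_iff] at this
      · rintro h _ ⟨b, hb, rfl⟩
        exact e.map_adj_iff.mpr (h b hb)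
    · show (∀ b ∈ ⇑e '' B, H.Adj (e q.1) b) ↔ (∀ b ∈ B, G.Adj q.1 b)
      constructor
      · intro h b hb
        have := h (e b) ⟨b, hb, rfl⟩
        rwa [e.map_adj_iff] at this
      · rintro h _ ⟨b, hb, rfl⟩
        exact e.map_adj_iff.mpr (h b hb)
    · exact e.map_adj_iff

private lemma walk_ivt {n : ℕ} (hn : 2 ≤ n) {C : Set (Fin n)} (hC : ∀ c ∈ C, c.val + 1 < n) :
    ∀ {u v : ↑C} (w : ((cycleGraph n).induce C).Walk u v) (z : ℕ),
      ((u : Fin n).val ≤ z ∧ z ≤ (v : Fin n).val) ∨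
        ((v : Fin n).val ≤ z ∧ z ≤ (u : Fin n).val) →
      ∃ c ∈ C, (c : Fin n).val = z
  | u, _, SimpleGraph.Walk.nil, z, hz => ⟨u.1, u.2, by omega⟩
  | u, v, @SimpleGraph.Walk.cons _ _ _ b _ hab w, z, hz => by
    have hadj : (cycleGraph n).Adj u.1 b.1 := hab
    rw [cycleAdjVal hn] at hadj
    have ha := hC u.1 u.2
    have hb := hC b.1 b.2
    by_cases hz' : ((b : Fin n).val ≤ z ∧ z ≤ (v : Fin n).val) ∨
        ((v : Fin n).val ≤ z ∧ z ≤ (b : Fin n).val)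
    · exact walk_ivt hn hC w z hz'
    · exact ⟨u.1, u.2, by omega⟩

private lemma interval_of_connected {n p : ℕ} (hn : 2 ≤ n) (hp : 1 ≤ p) {C : Set (Fin n)}
    (hconn : ((cycleGraph n).induce C).Connected)
    (hlast : (⟨n - 1, by omega⟩ : Fin n) ∉ C) (hcard : C.ncard = p) :
    ∃ m : ℕ, m + p < n ∧ C = {x : Fin n | m ≤ x.val ∧ x.val < m + p} := by
  classical
  have hCne : C.Nonempty := Set.nonempty_of_ncard_ne_zero (by omega)
  have hbound : ∀ c ∈ C, c.val + 1 < n := by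
    intro c hc
    have := c.isLt
    by_contra hcon
    have : c = (⟨n - 1, by omega⟩ : Fin n) := Fin.ext (by simp only [Fin.val_mk]; omega)
    exact hlast (this ▸ hc)
  set F : Finset (Fin n) := C.toFinset with hF
  have hFne : (F.image Fin.val).Nonempty := by
    obtain ⟨x, hx⟩ := hCne
    exact ⟨x.val, Finset.mem_image_of_mem _ (Set.mem_toFinset.mpr hx)⟩
  set m := (F.image Fin.val).min' hFne with hm
  set M := (F.image Fin.val).max' hFne with hM
  obtain ⟨xm, hxmF, hxm⟩ := Finset.mem_image.mp ((F.image Fin.val).min'_mem hFne)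
  obtain ⟨xM, hxMF, hxM⟩ := Finset.mem_image.mp ((F.image Fin.val).max'_mem hFne)
  have hxmC : xm ∈ C := Set.mem_toFinset.mp hxmF
  have hxMC : xM ∈ C := Set.mem_toFinset.mp hxMF
  have hivt : ∀ z : ℕ, m ≤ z → z ≤ M → ∃ c ∈ C, (c : Fin n).val = z := by
    intro z h1 h2
    obtain ⟨w⟩ := hconn.preconnected ⟨xm, hxmC⟩ ⟨xM, hxMC⟩
    have h3 : ((⟨xm, hxmC⟩ : ↑C) : Fin n).val = m := hxm
    have h4 : ((⟨xM, hxMC⟩ : ↑C) : Fin n).val = M := hxM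
    exact walk_ivt hn hbound w z (Or.inl (by omega))
  have hsub : ∀ c ∈ C, m ≤ c.val ∧ c.val ≤ M := by
    intro c hc
    have hcF : c.val ∈ F.image Fin.val := Finset.mem_image_of_mem _ (Set.mem_toFinset.mpr hc)
    exact ⟨Finset.min'_le _ _ hcF, Finset.le_max' _ _ hcF⟩
  have himg : F.image Fin.val = Finset.Icc m M := by
    ext z
    simp only [Finset.mem_Icc, Finset.mem_image]
    constructor
    · rintro ⟨c, hcF, rfl⟩
      exact hsub c (Set.mem_toFinset.mp hcF)
    · rintro ⟨h1, h2⟩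
      obtain ⟨c, hc, hcz⟩ := hivt z h1 h2
      exact ⟨c, Set.mem_toFinset.mpr hc, hcz⟩
  have hcardF : p = M + 1 - m := by
    rw [← hcard, Set.ncard_eq_toFinset_card', ← hF,
      ← Finset.card_image_of_injective F Fin.val_injective, himg, Nat.card_Icc]
  have hMn : M + 1 < n := by
    have := hbound xM hxMC
    omega
  have hmM : m ≤ M := by
    have := hsub xm hxmC
    omega
  refine ⟨m, by omega, ?_⟩
  ext x
  simp only [Set.mem_setOf_eq]
  constructor
  · intro hx
    have := hsub x hx
    omega
  · intro hx
    obtain ⟨c, hc, hcz⟩ := hivt x.val (by omega) (by omega)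
    have : c = x := Fin.ext hcz
    exact this ▸ hc

private lemma classify {n p : ℕ} (hn : 5 ≤ n) (hp1 : 1 ≤ p) (hp2 : p ≤ n - 2)
    {B : Set (Fin n)} (hcard : B.ncard = p)
    (hconn : ((cycleGraph n).induce B).Connected) :
    ∃ a : Fin n, B = (fun x => x + a) '' {x : Fin n | x.val < p} := by
  classical
  haveI : NeZero n := ⟨by omega⟩
  obtain ⟨a₀, ha₀⟩ : ∃ a₀ : Fin n, a₀ ∉ B := by
    by_contra hcon
    push_neg at hcon
    have : B = Set.univ := Set.eq_univ_iff_forall.mpr hcon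
    rw [this, Set.ncard_univ, Nat.card_eq_fintype_card, Fintype.card_fin] at hcard
    omega
  set d : Fin n := -(a₀ + 1) with hd
  set r : Fin n ≃ Fin n := Equiv.addRight d with hr
  set C : Set (Fin n) := r '' B with hC
  have hcoe : ⇑(rotIso (n := n) d) = ⇑r := rfl
  have hconnC : ((cycleGraph n).induce C).Connected := by
    have := (induceIso (rotIso (n := n) d) B).connected_iff.mp hconn
    rwa [hcoe] at this
  have hlast : (⟨n - 1, by omega⟩ : Fin n) ∉ C := by
    rintro ⟨x, hx, hxe⟩
    have hone : (⟨n - 1, by omega⟩ : Fin n) + 1 = 0 := by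
      apply Fin.ext
      rw [Fin.add_def]
      simp only [Fin.val_mk, Fin.val_one', Fin.val_zero]
      rw [Nat.mod_eq_of_lt (show 1 < n by omega)]
      have h9 : n - 1 + 1 = n := by omega
      rw [h9, Nat.mod_self]
    have hneg : (⟨n - 1, by omega⟩ : Fin n) = -1 := eq_neg_of_add_eq_zero_left hone
    have : x = a₀ := by
      have hx' : x + d = ⟨n - 1, by omega⟩ := hxe
      rw [hd] at hx'
      rw [hneg] at hx'
      have : x = -1 - (-(a₀ + 1)) := eq_sub_of_add_eq hx'
      rw [this]
      abel
    rw [this] at hx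
    exact ha₀ hx
  have hcardC : C.ncard = p := by rw [hC, Set.ncard_image_of_injective B r.injective, hcard]
  obtain ⟨m, hmn, hCeq⟩ := interval_of_connected (by omega) hp1 hconnC hlast hcardC
  have hmlt : m < n := by omega
  have hint : C = (fun y => y + (⟨m, hmlt⟩ : Fin n)) '' {x : Fin n | x.val < p} := by
    rw [hCeq]
    ext x
    simp only [Set.mem_setOf_eq, Set.mem_image]
    constructor
    · intro hx
      refine ⟨x - ⟨m, hmlt⟩, ?_, by rw [sub_add_cancel]⟩
      have hxv := x.isLt
      rw [Fin.sub_def]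
      simp only [Set.mem_setOf_eq, Fin.val_mk]
      rw [hmod_aux n _ (by omega) (by omega)]
      split_ifs <;> omega
    · rintro ⟨y, hy, rfl⟩
      have hyv := y.isLt
      rw [Fin.add_def]
      simp only [Fin.val_mk]
      rw [Nat.mod_eq_of_lt (by omega)]
      omega
  refine ⟨⟨m, hmlt⟩ + (a₀ + 1), ?_⟩
  have hB : B = r.symm '' C := by rw [hC, Equiv.symm_image_image]
  rw [hB, hint, Set.image_image]
  apply Set.image_congr'
  intro y
  rw [hr, hd]
  simp only [Equiv.addRight_symm, Equiv.coe_addRight, neg_neg]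
  rw [add_assoc]

private noncomputable def finalEquiv (n p : ℕ) (hn : 5 ≤ n) (hp1 : 1 ≤ p) (hp2 : p ≤ n - 2) :
    Option {v : Fin n // v ∉ {x : Fin n | x.val < p}} ≃ Fin (n - p + 1) :=
  Equiv.ofBijective (fun x => match x with
    | none => ⟨0, by omega⟩
    | some q => ⟨q.1.val - p + 1, by have h1 := q.1.isLt; omega⟩) (by
    constructor
    · rintro (_ | q) (_ | q') h
      · rfl
      · exfalso
        have hq' : ¬ q'.1.val < p := q'.2
        have h2 : (0 : ℕ) = q'.1.val - p + 1 := congrArg Fin.val h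
        omega
      · exfalso
        have hq : ¬ q.1.val < p := q.2
        have h2 : q.1.val - p + 1 = (0 : ℕ) := congrArg Fin.val h
        omega
      · have hq : ¬ q.1.val < p := q.2
        have hq' : ¬ q'.1.val < p := q'.2
        have h2 : q.1.val - p + 1 = q'.1.val - p + 1 := congrArg Fin.val h
        exact congrArg some (Subtype.ext (Fin.ext (by omega)))
    · intro k
      have hk := k.isLt
      by_cases h : k.val = 0
      · refine ⟨none, Fin.ext ?_⟩
        show (0 : ℕ) = k.val
        omega
      · refine ⟨some ⟨⟨k.val + p - 1, by omega⟩, fun hmem => ?_⟩, Fin.ext ?_⟩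
        · simp only [Set.mem_setOf_eq, Fin.val_mk] at hmem
          omega
        · show (k.val + p - 1) - p + 1 = k.val
          omega)

private noncomputable def finalIso (n p : ℕ) (hn : 5 ≤ n) (hp1 : 1 ≤ p) (hp2 : p ≤ n - 2) :
    ((cycleGraph n)ᶜ.coContract {x : Fin n | x.val < p}) ≃g (cycleGraph (n - p + 1))ᶜ where
  toEquiv := finalEquiv n p hn hp1 hp2
  map_rel_iff' := by
    have hm2 : 2 ≤ n - p + 1 := by omega
    have hn2 : 2 ≤ n := by omega
    have key : ∀ (q : {v : Fin n // v ∉ {x : Fin n | x.val < p}}),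
        ((cycleGraph (n - p + 1))ᶜ.Adj ⟨q.1.val - p + 1, by have := q.1.isLt; omega⟩
          ⟨0, by omega⟩ ↔ (∀ b ∈ {x : Fin n | x.val < p}, (cycleGraph n)ᶜ.Adj q.1 b)) := by
      intro q
      have hq : ¬ q.1.val < p := q.2
      have hlt := q.1.isLt
      rw [compl_adj, cycleAdjVal hm2]
      simp only [ne_eq, Fin.ext_iff, Fin.val_mk, true_and, and_true]
      constructor
      · rintro ⟨h1, h2⟩ b hb
        simp only [Set.mem_setOf_eq] at hb
        have hblt := b.isLt
        rw [compl_adj, cycleAdjVal hn2]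
        constructor
        · intro hEq
          have : q.1.val = b.val := congrArg Fin.val hEq
          omega
        · intro hor
          omega
      · intro hAll
        have h1 := hAll ⟨p - 1, by omega⟩ (by simp only [Set.mem_setOf_eq, Fin.val_mk]; omega)
        have h2 := hAll ⟨0, by omega⟩ (by simp only [Set.mem_setOf_eq, Fin.val_mk]; omega)
        rw [compl_adj, cycleAdjVal hn2] at h1 h2
        simp only [ne_eq, Fin.ext_iff, Fin.val_mk, true_and, and_true] at h1 h2
        omega
    have key2 : ∀ (q q' : {v : Fin n // v ∉ {x : Fin n | x.val < p}}),
        ((cycleGraph (n - p + 1))ᶜ.Adj ⟨q.1.val - p + 1, by have := q.1.isLt; omega⟩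
          ⟨q'.1.val - p + 1, by have := q'.1.isLt; omega⟩ ↔
            (cycleGraph n)ᶜ.Adj q.1 q'.1) := by
      intro q q'
      have hq : ¬ q.1.val < p := q.2
      have hq' : ¬ q'.1.val < p := q'.2
      have hlt := q.1.isLt
      have hlt' := q'.1.isLt
      rw [compl_adj, compl_adj, cycleAdjVal hm2, cycleAdjVal hn2]
      simp only [ne_eq, Fin.ext_iff, Fin.val_mk, true_and, and_true]
      omega
    rintro (_ | q) (_ | q')
    · exact iff_of_false (fun h => ((SimpleGraph.compl_adj _ _ _).mp h).1 rfl) (fun h => h)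
    · exact (SimpleGraph.adj_comm _ _ _).trans (key q')
    · exact key q
    · exact key2 q q'

end AuxForCoContract

theorem coContract_compl_cycleGraph_iso (n p : ℕ) (hn : 5 ≤ n) (hp1 : 1 ≤ p) (hp2 : p ≤ n - 2)
    (B : Set (Fin n)) (hcard : B.ncard = p)
    (hanti : Anticonnected ((SimpleGraph.cycleGraph n)ᶜ) B) :
    Nonempty (((SimpleGraph.cycleGraph n)ᶜ).coContract B ≃g (SimpleGraph.cycleGraph (n - p + 1))ᶜ) := by
  classical
  haveI : NeZero n := ⟨by omega⟩
  have hconn : ((cycleGraph n).induce B).Connected := by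
    unfold Anticonnected at hanti
    rwa [compl_compl] at hanti
  obtain ⟨a, hBa⟩ := classify hn hp1 hp2 hcard hconn
  let e : (cycleGraph n)ᶜ ≃g (cycleGraph n)ᶜ := complIso (rotIso a)
  have himg : ⇑e '' {x : Fin n | x.val < p} = B := by
    rw [hBa]
    exact Set.image_congr' (fun x => rfl)
  have i1 := coContractIso e {x : Fin n | x.val < p}
  rw [himg] at i1
  exact ⟨i1.symm.trans (finalIso n p hn hp1 hp2)⟩
end

section
/- For n > 5, the complement graph of the cycle C_n contains no induced cycle of length m for any m ≥ 5. -/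
open SimpleGraph

variable {V : Type*}

lemma fin_step {nn : ℕ} [NeZero nn] (h5 : 5 < nn) {x y : Fin nn} (h : x = y + 1) :
    x.val = y.val + 1 ∨ (x.val = 0 ∧ y.val + 1 = nn) := by
  subst h
  rw [Fin.add_def]
  have hy := y.isLt
  have h1 : (1 : Fin nn).val = 1 := by
    rw [Fin.val_one']; exact Nat.mod_eq_of_lt (by omega)
  rw [h1]
  rcases Nat.lt_or_ge (y.val + 1) nn with h | h
  · left; simp [Nat.mod_eq_of_lt h]
  · right
    have : y.val + 1 = nn := by omega
    simp [this]

lemma fin_sub_val {m : ℕ} (a b : Fin m) :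
    (a - b).val = if b.val ≤ a.val then a.val - b.val else a.val + m - b.val := by
  rw [Fin.sub_def]
  have ha := a.isLt
  have hb := b.isLt
  show (m - b.val + a.val) % m = _
  rcases le_or_gt b.val a.val with h | h
  · have he : m - b.val + a.val = (a.val - b.val) + m := by omega
    rw [he, Nat.add_mod_right, Nat.mod_eq_of_lt (by omega), if_pos h]
  · rw [Nat.mod_eq_of_lt (by omega), if_neg (by omega)]
    omega

lemma cycle_not_adj {m : ℕ} (a b : Fin m)
    (h1 : a.val + 1 ≠ b.val) (h2 : b.val + 1 ≠ a.val)
    (h3 : a.val + 1 ≠ b.val + m) (h4 : b.val + 1 ≠ a.val + m) :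
    ¬ (cycleGraph m).Adj a b := by
  rw [cycleGraph_adj']
  have ha := a.isLt
  have hb := b.isLt
  rw [fin_sub_val, fin_sub_val]
  split_ifs <;> omega

theorem compl_cycleGraph_no_long_induced_cycle (n : ℕ) (hn : 5 < n) (m : ℕ) (hm : 5 ≤ m)
    (S : Set (Fin n)) :
    IsEmpty ((((SimpleGraph.cycleGraph n)ᶜ).induce S) ≃g SimpleGraph.cycleGraph m) := by
  
  constructor
  intro e
  haveI : NeZero n := ⟨by omega⟩
  obtain ⟨n', rfl⟩ : ∃ n', n = n' + 2 := ⟨n - 2, by omega⟩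
  set f : Fin m → Fin (n' + 2) := fun a => ((e.symm a : S) : Fin (n' + 2)) with hf
  have hinj : Function.Injective f := fun a b h =>
    e.symm.injective (Subtype.val_injective h)
  have key : ∀ a b : Fin m, a ≠ b → ¬ (cycleGraph m).Adj a b →
      (cycleGraph (n' + 2)).Adj (f a) (f b) := by
    intro a b hab hnadj
    have h1 : ¬ (((cycleGraph (n' + 2))ᶜ).induce S).Adj (e.symm a) (e.symm b) := by
      rw [e.symm.map_adj_iff]; exact hnadj
    have h2 : f a ≠ f b := fun h => hab (hinj h)
    simp only [comap_adj, Function.Embedding.coe_subtype, compl_adj] at h1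
    push_neg at h1
    exact h1 h2
  -- step form: adjacency in cycle graph gives ±1 relation
  have hD : ∀ u v : Fin (n' + 2), (cycleGraph (n' + 2)).Adj u v →
      u = v + 1 ∨ v = u + 1 := by
    intro u v h
    rw [cycleGraph_adj] at h
    rcases h with h | h
    · left; rw [sub_eq_iff_eq_add] at h; rw [h]; exact add_comm 1 v
    · right; rw [sub_eq_iff_eq_add] at h; rw [h]; exact add_comm 1 u
  have T : ∀ u v : Fin (n' + 2), (cycleGraph (n' + 2)).Adj u v →
      (u.val = v.val + 1 ∨ (u.val = 0 ∧ v.val + 1 = n' + 2)) ∨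
      (v.val = u.val + 1 ∨ (v.val = 0 ∧ u.val + 1 = n' + 2)) := by
    intro u v h
    rcases hD u v h with h | h
    · exact Or.inl (fin_step hn h)
    · exact Or.inr (fin_step hn h)
  rcases Nat.lt_or_ge m 6 with hm6 | hm6
  · -- m = 5 case
    have hm5 : m = 5 := by omega
    subst hm5
    have r02 := T _ _ (key 0 2 (by decide) (by decide))
    have r24 := T _ _ (key 2 4 (by decide) (by decide))
    have r41 := T _ _ (key 4 1 (by decide) (by decide))
    have r13 := T _ _ (key 1 3 (by decide) (by decide))
    have r30 := T _ _ (key 3 0 (by decide) (by decide))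
    have b0 := (f 0).isLt
    have b1 := (f 1).isLt
    have b2 := (f 2).isLt
    have b3 := (f 3).isLt
    have b4 := (f 4).isLt
    omega
  · -- m ≥ 6 case
    set a0 : Fin m := ⟨0, by omega⟩ with ha0
    set a2 : Fin m := ⟨2, by omega⟩ with ha2
    set a3 : Fin m := ⟨3, by omega⟩ with ha3
    set am : Fin m := ⟨m - 2, by omega⟩ with ham
    have v0 : a0.val = 0 := rfl
    have v2 : a2.val = 2 := rfl
    have v3 : a3.val = 3 := rfl
    have vm : am.val = m - 2 := rfl
    have h2 := hD _ _ (key a0 a2 (Fin.ne_of_val_ne (by omega)) (cycle_not_adj _ _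
      (by omega) (by omega) (by omega) (by omega)))
    have h3 := hD _ _ (key a0 a3 (Fin.ne_of_val_ne (by omega)) (cycle_not_adj _ _
      (by omega) (by omega) (by omega) (by omega)))
    have h4 := hD _ _ (key a0 am (Fin.ne_of_val_ne (by omega)) (cycle_not_adj _ _
      (by omega) (by omega) (by omega) (by omega)))
    have ne23 : f a2 ≠ f a3 := fun h => by
      have := hinj h
      rw [Fin.ext_iff] at this
      omega
    have ne2m : f a2 ≠ f am := fun h => by
      have := hinj h
      rw [Fin.ext_iff] at this
      omega
    have ne3m : f a3 ≠ f am := fun h => by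
      have := hinj h
      rw [Fin.ext_iff] at this
      omega
    rcases h2 with h2 | h2 <;> rcases h3 with h3 | h3 <;> rcases h4 with h4 | h4 <;>
      first
        | exact ne23 (h2.trans h3.symm)
        | exact ne2m (h2.trans h4.symm)
        | exact ne3m (h3.trans h4.symm)
        | exact ne23 (add_right_cancel (h2.symm.trans h3))
        | exact ne2m (add_right_cancel (h2.symm.trans h4))
        | exact ne3m (add_right_cancel (h3.symm.trans h4))
end

section
/- Let H be a group, φ: C → D an isomorphism between subgroups of H, and G = H∗_φ the corresponding HNN extension with stable letter t. Let K ≤ H and J = ⟨K, t⟩ ≤ G. Let ψ: J∩C → J∩D be the restriction of φ. Then the inclusion J∩H ↪ J extends to an isomorphism (J∩H)∗_ψ → J sending the stable letter of (J∩H)∗_ψ to t; in particular J∩C and J∩D are isomorphic via φ and J is an HNN extension of J∩H. -/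
open SimpleGraph

variable {V : Type*}

open HNNExtension HNNExtension.NormalWord in
theorem hnn_restrict_injective {H : Type*} [Group H] (C D : Subgroup H) (φ : ↥C ≃* ↥D)
    (JH : Subgroup H) (C'' D'' : Subgroup ↥JH)
    (hC : ∀ x : ↥JH, x ∈ C'' ↔ (x : H) ∈ C)
    (hD : ∀ x : ↥JH, x ∈ D'' ↔ (x : H) ∈ D)
    (ψ : ↥C'' ≃* ↥D'')
    (F : HNNExtension ↥JH C'' D'' ψ →* HNNExtension H C D φ)
    (hF1 : ∀ x : ↥JH, F (HNNExtension.of x) = HNNExtension.of (x : H))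
    (hF2 : F HNNExtension.t = HNNExtension.t) :
    Function.Injective F := by
  rw [injective_iff_map_eq_one]
  intro x hx
  obtain ⟨d⟩ := TransversalPair.nonempty ↥JH C'' D''
  set w : NormalWord d := NormalWord.equiv ψ d x with hw
  have hprod : w.prod ψ = x := (NormalWord.equiv ψ d).symm_apply_apply x
  have chain' : (w.toList.map (Prod.map id (JH.subtype))).Chain'
      (fun a b => a.2 ∈ toSubgroup C D a.1 → a.1 = b.1) := by
    unfold List.Chain'
    rw [List.isChain_map]
    refine List.IsChain.imp ?_ w.chain
    intro a b h hmem
    obtain ⟨u, g⟩ := a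
    simp only [Prod.map, id] at hmem
    apply h
    rcases Int.units_eq_one_or u with h1 | h1 <;> subst h1 <;>
      simp only [toSubgroup_one, toSubgroup_neg_one] at hmem ⊢
    · exact (hC _).2 hmem
    · exact (hD _).2 hmem
  set W' : ReducedWord H C D :=
    { head := (w.head : H)
      toList := w.toList.map (Prod.map id (JH.subtype))
      chain := chain' } with hW'def
  have key : ∀ p : ℤˣ × ↥JH,
      F (HNNExtension.t ^ (p.1 : ℤ) * HNNExtension.of p.2) =
        HNNExtension.t ^ (p.1 : ℤ) * HNNExtension.of (p.2 : H) := by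
    intro p; rw [map_mul, map_zpow, hF2, hF1]
  have hWprod : W'.prod φ = F x := by
    rw [← hprod]
    show W'.prod φ = F ((w.toReducedWord).prod ψ)
    rw [ReducedWord.prod, ReducedWord.prod, map_mul, map_list_prod, List.map_map, hF1]
    congr 1
    simp only [hW'def, List.map_map]
    exact congrArg List.prod (List.map_congr_left fun p _ => by
      simp only [Function.comp, Prod.map, id]
      exact (key p).symm)
  have hmem : W'.prod φ ∈ (HNNExtension.of.range : Subgroup (HNNExtension H C D φ)) :=
    ⟨1, by rw [map_one, hWprod, hx]⟩
  have hnil : W'.toList = [] := ReducedWord.toList_eq_nil_of_mem_of_range φ W' hmem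
  have hnil' : w.toList = [] := by
    have := hnil
    simp only [hW'def, List.map_eq_nil_iff] at this
    exact this
  have hxg : x = HNNExtension.of w.head := by
    rw [← hprod]
    show (w.toReducedWord).prod ψ = _
    rw [ReducedWord.prod]
    show HNNExtension.of w.head * (w.toList.map _).prod = _
    rw [hnil']
    simp
  have heq : (HNNExtension.of (w.head : H) : HNNExtension H C D φ) = HNNExtension.of (1 : H) := by
    rw [map_one, ← hF1, ← hxg, hx]
  have h1 : (w.head : H) = 1 := HNNExtension.of_injective (φ := φ) heq
  have h2 : w.head = 1 := Subtype.ext h1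
  rw [hxg, h2, map_one]

theorem hnn_subgroup_structure {H : Type*} [Group H] (C D : Subgroup H) (φ : ↥C ≃* ↥D)
    (K : Subgroup H) :
    let G := HNNExtension H C D φ
    let J : Subgroup G :=
      Subgroup.closure ((K.map (HNNExtension.of) : Subgroup G) ∪ {HNNExtension.t})
    let JH : Subgroup H := J.comap HNNExtension.of
    let C' : Subgroup H := JH ⊓ C
    let D' : Subgroup H := JH ⊓ D
    ∃ ψ : ↥(C'.subgroupOf JH) ≃* ↥(D'.subgroupOf JH),
      (∀ x : ↥(C'.subgroupOf JH),
        (((ψ x : ↥JH) : H)) =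
          ((φ ⟨((x : ↥JH) : H),
            (Subgroup.mem_inf.mp (Subgroup.mem_subgroupOf.mp x.2)).2⟩ : ↥D) : H)) ∧
      ∃ e : HNNExtension ↥JH (C'.subgroupOf JH) (D'.subgroupOf JH) ψ ≃* ↥J,
        (∀ x : ↥JH, ((e (HNNExtension.of x) : ↥J) : G) = HNNExtension.of (x : H)) ∧
        ((e HNNExtension.t : ↥J) : G) = HNNExtension.t := by
  intro G J JH C' D'
  have htJ : (HNNExtension.t : G) ∈ J := Subgroup.subset_closure (Or.inr rfl)
  -- membership transfer lemmas
  have hofJ : ∀ x : ↥JH, HNNExtension.of (x : H) ∈ J := fun x => x.2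
  have hφJH : ∀ c : ↥C, (c : H) ∈ JH → ((φ c : ↥D) : H) ∈ JH := by
    intro c hc
    have h1 : (HNNExtension.of ((φ c : ↥D) : H) : G) =
        HNNExtension.t * HNNExtension.of (c : H) * HNNExtension.t⁻¹ :=
      HNNExtension.equiv_eq_conj (φ := φ) c
    show HNNExtension.of ((φ c : ↥D) : H) ∈ J
    rw [h1]
    exact mul_mem (mul_mem htJ hc) (inv_mem htJ)
  have hφsJH : ∀ b : ↥D, (b : H) ∈ JH → ((φ.symm b : ↥C) : H) ∈ JH := by
    intro b hb
    have h1 : (HNNExtension.of ((φ.symm b : ↥C) : H) : G) =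
        HNNExtension.t⁻¹ * HNNExtension.of (b : H) * HNNExtension.t :=
      HNNExtension.equiv_symm_eq_conj (φ := φ) b
    show HNNExtension.of ((φ.symm b : ↥C) : H) ∈ J
    rw [h1]
    exact mul_mem (mul_mem (inv_mem htJ) hb) htJ
  have hCmem : ∀ x : ↥(C'.subgroupOf JH), ((x : ↥JH) : H) ∈ C :=
    fun x => (Subgroup.mem_inf.mp (Subgroup.mem_subgroupOf.mp x.2)).2
  have hDmem : ∀ x : ↥(D'.subgroupOf JH), ((x : ↥JH) : H) ∈ D :=
    fun x => (Subgroup.mem_inf.mp (Subgroup.mem_subgroupOf.mp x.2)).2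
  -- define ψ
  let ψ : ↥(C'.subgroupOf JH) ≃* ↥(D'.subgroupOf JH) := {
      toFun := fun x => ⟨⟨((φ ⟨_, hCmem x⟩ : ↥D) : H), hφJH _ (x : ↥JH).2⟩,
        Subgroup.mem_subgroupOf.mpr (Subgroup.mem_inf.mpr
          ⟨hφJH _ (x : ↥JH).2, (φ ⟨_, hCmem x⟩ : ↥D).2⟩)⟩
      invFun := fun y => ⟨⟨((φ.symm ⟨_, hDmem y⟩ : ↥C) : H), hφsJH _ (y : ↥JH).2⟩,
        Subgroup.mem_subgroupOf.mpr (Subgroup.mem_inf.mpr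
          ⟨hφsJH _ (y : ↥JH).2, (φ.symm ⟨_, hDmem y⟩ : ↥C).2⟩)⟩
      left_inv := by
        intro x
        ext
        show ((φ.symm ⟨((φ ⟨_, hCmem x⟩ : ↥D) : H), _⟩ : ↥C) : H) = _
        rw [show (⟨((φ ⟨_, hCmem x⟩ : ↥D) : H), _⟩ : ↥D) = φ ⟨_, hCmem x⟩ from rfl]
        rw [φ.symm_apply_apply]
      right_inv := by
        intro y
        ext
        show ((φ ⟨((φ.symm ⟨_, hDmem y⟩ : ↥C) : H), _⟩ : ↥D) : H) = _
        rw [show (⟨((φ.symm ⟨_, hDmem y⟩ : ↥C) : H), _⟩ : ↥C) = φ.symm ⟨_, hDmem y⟩ from rfl]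
        rw [φ.apply_symm_apply]
      map_mul' := by
        intro x y
        ext
        show ((φ ⟨_, hCmem (x * y)⟩ : ↥D) : H) = _
        rw [show (⟨_, hCmem (x * y)⟩ : ↥C) = ⟨_, hCmem x⟩ * ⟨_, hCmem y⟩ from rfl, map_mul]
        rfl }
  refine ⟨ψ, fun x => rfl, ?_⟩
  -- the homomorphism to J
  let f : ↥JH →* ↥J := (HNNExtension.of.comp JH.subtype).codRestrict J hofJ
  let t' : ↥J := ⟨HNNExtension.t, htJ⟩
  have hcond : ∀ a : ↥(C'.subgroupOf JH), t' * f ↑a = f ↑(ψ a) * t' := by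
    intro a
    apply Subtype.ext
    show HNNExtension.t * HNNExtension.of ((a : ↥JH) : H) =
      HNNExtension.of (((ψ a : ↥JH)) : H) * HNNExtension.t
    exact HNNExtension.t_mul_of (φ := φ) ⟨_, hCmem a⟩
  let Φ : HNNExtension ↥JH (C'.subgroupOf JH) (D'.subgroupOf JH) ψ →* ↥J :=
    HNNExtension.lift f t' hcond
  let F : HNNExtension ↥JH (C'.subgroupOf JH) (D'.subgroupOf JH) ψ →* G :=
    J.subtype.comp Φ
  have hF1 : ∀ x : ↥JH, F (HNNExtension.of x) = HNNExtension.of (x : H) := by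
    intro x
    show (Φ (HNNExtension.of x) : G) = _
    rw [HNNExtension.lift_of]
    rfl
  have hF2 : F HNNExtension.t = HNNExtension.t := by
    show (Φ HNNExtension.t : G) = _
    rw [HNNExtension.lift_t]
  have hC'' : ∀ x : ↥JH, x ∈ C'.subgroupOf JH ↔ (x : H) ∈ C := by
    intro x
    rw [Subgroup.mem_subgroupOf, Subgroup.mem_inf]
    exact ⟨fun h => h.2, fun h => ⟨x.2, h⟩⟩
  have hD'' : ∀ x : ↥JH, x ∈ D'.subgroupOf JH ↔ (x : H) ∈ D := by
    intro x
    rw [Subgroup.mem_subgroupOf, Subgroup.mem_inf]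
    exact ⟨fun h => h.2, fun h => ⟨x.2, h⟩⟩
  have hFinj : Function.Injective F :=
    hnn_restrict_injective C D φ JH _ _ hC'' hD'' ψ F hF1 hF2
  have hΦinj : Function.Injective Φ := by
    have : (F : HNNExtension ↥JH (C'.subgroupOf JH) (D'.subgroupOf JH) ψ → G) =
        (J.subtype : ↥J → G) ∘ Φ := rfl
    rw [this] at hFinj
    exact hFinj.of_comp
  have hΦsurj : Function.Surjective Φ := by
    have hle : J ≤ Φ.range.map J.subtype := by
      show Subgroup.closure _ ≤ _
      rw [Subgroup.closure_le]
      rintro g (hg | hg)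
      · obtain ⟨k, hk, rfl⟩ := hg
        have hkJ : (HNNExtension.of k : G) ∈ J :=
          Subgroup.subset_closure (Or.inl ⟨k, hk, rfl⟩)
        refine ⟨Φ (HNNExtension.of ⟨k, hkJ⟩), ⟨_, rfl⟩, ?_⟩
        exact hF1 ⟨k, hkJ⟩
      · rw [Set.mem_singleton_iff] at hg
        subst hg
        exact ⟨Φ HNNExtension.t, ⟨_, rfl⟩, hF2⟩
    intro y
    obtain ⟨z, hz, hzy⟩ := hle y.2
    obtain ⟨x, rfl⟩ := hz
    exact ⟨x, Subtype.ext hzy⟩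
  refine ⟨MulEquiv.ofBijective Φ ⟨hΦinj, hΦsurj⟩, fun x => hF1 x, hF2⟩
end
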